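/- For every positive integer n and real x, the n-th derivative with respect to x of e^(e^(-x)) equals e^(e^(-x)) · Σ_{k=1}^{n} (-1)^k · (Σ_{ℓ=1}^{k} L(k,ℓ) · e^(-ℓx)) · S(n,k), where L(k,ℓ) are Lah numbers and S(n,k) are Stirling numbers of the second kind. -/

import Mathlib

open Finset

/-- Stirling numbers of the second kind. -/
def stirling : ℕ → ℕ → ℕ
  | 0, 0 => 1
  | 0, _ + 1 => 0
  | _ + 1, 0 => 0
  | n + 1, k + 1 => stirling n k + (k + 1) * stirling n (k + 1)

/-- Bell numbers, via the standard binomial recurrence. -/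
def bell : ℕ → ℕ
  | 0 => 1
  | n + 1 => ∑ k ∈ (Finset.range (n + 1)).attach, Nat.choose n k.1 * bell k.1
decreasing_by exact Nat.lt_succ_of_le (Nat.lt_succ_iff.mp (Finset.mem_range.mp k.2))

/-- Lah numbers: L(n,k) = C(n-1,k-1) · n!/k! for k ≥ 1, L(0,0)=1, L(n,0)=0 for n ≥ 1. -/
def lah (n k : ℕ) : ℕ :=
  if k = 0 then (if n = 0 then 1 else 0)
  else (n - 1).choose (k - 1) * Nat.factorial n / Nat.factorial k

/-! Write `u = e^{-x}`. Then `d/dx (e^u p(u)) = e^u (T p)(u)` with `T p = -X (p + p')`, so the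
`n`-th derivative of `e^{e^{-x}}` is `e^u (Tⁿ 1)(u)`. The Lah polynomials `L_k = ∑_ℓ L(k,ℓ) X^ℓ`
satisfy `L_{k+1} = (X + k) L_k + X L_k'`, i.e. `T L_k = k L_k - L_{k+1}`; against the recurrence
`S(n+1,k+1) = S(n,k) + (k+1) S(n,k+1)` this gives `Tⁿ L_0 = ∑_k (-1)^k S(n,k) L_k` by induction. -/

open Nat Polynomial Real

theorem stirling_eq_stirlingSecond : stirling = Nat.stirlingSecond := by
  funext n k
  induction n generalizing k with
  | zero => cases k <;> rfl
  | succ n ih =>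
    cases k with
    | zero => rfl
    | succ k => rw [stirling, Nat.stirlingSecond_succ_succ, ih, ih, add_comm]

theorem lah_zero_right {n : ℕ} (hn : n ≠ 0) : lah n 0 = 0 := by
  simp [lah, hn]

-- `n ≠ 0` is needed: the formula defining `lah` gives `lah 0 1 = 1`.
theorem lah_eq_zero_of_lt {n k : ℕ} (hn : n ≠ 0) (h : n < k) : lah n k = 0 := by
  rw [lah, if_neg (by omega), Nat.choose_eq_zero_of_lt (by omega), zero_mul, Nat.zero_div]

theorem lah_succ_mul_factorial (n k : ℕ) :
    lah (n + 1) (k + 1) * (k + 1)! = n.choose k * (n + 1)! := by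
  rw [lah, if_neg k.succ_ne_zero, Nat.add_sub_cancel, Nat.add_sub_cancel]
  refine Nat.div_mul_cancel ?_
  rcases le_or_gt k n with h | h
  · exact Dvd.dvd.mul_left (Nat.factorial_dvd_factorial (by omega)) _
  · simp [Nat.choose_eq_zero_of_lt h]

theorem lah_succ_succ {n : ℕ} (hn : n ≠ 0) (k : ℕ) :
    lah (n + 1) (k + 1) = lah n k + (n + k + 1) * lah n (k + 1) := by
  obtain ⟨n, rfl⟩ := Nat.exists_eq_add_one_of_ne_zero hn
  rcases k with _ | k
  · simp [lah, Nat.factorial_succ]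
  apply Nat.eq_of_mul_eq_mul_right (Nat.factorial_pos (k + 2))
  have hchoose : (n + 1).choose (k + 1) * (n + 2)
      = (k + 2) * n.choose k + (n + k + 3) * n.choose (k + 1) := by
    have := Nat.add_one_mul_choose_eq n k
    rw [Nat.choose_succ_succ] at this ⊢
    nlinarith
  calc lah (n + 2) (k + 2) * (k + 2)! = (n + 1).choose (k + 1) * (n + 2) * (n + 1)! := by
        rw [lah_succ_mul_factorial, Nat.factorial_succ (n + 1)]; ring
    _ = (k + 2) * (lah (n + 1) (k + 1) * (k + 1)!)
          + (n + k + 3) * (lah (n + 1) (k + 2) * (k + 2)!) := by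
        rw [hchoose, lah_succ_mul_factorial, lah_succ_mul_factorial]; ring
    _ = _ := by rw [Nat.factorial_succ (k + 1)]; ring

theorem Finset.sum_range_succ_eq_sum_Icc_one {M : Type*} [AddCommMonoid M] {f : ℕ → M}
    (h : f 0 = 0) (n : ℕ) : ∑ k ∈ range (n + 1), f k = ∑ k ∈ Icc 1 n, f k := by
  rw [range_succ_eq_Icc_zero, ← insert_Icc_add_one_left_eq_Icc n.zero_le, sum_insert (by simp), h,
    zero_add, zero_add]

section LahPolynomial

variable (R : Type*) [CommSemiring R]

noncomputable def lahPoly (n : ℕ) : R[X] :=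
  ∑ k ∈ range (n + 1), C (lah n k : R) * X ^ k

variable {R}

theorem coeff_lahPoly {n : ℕ} (hn : n ≠ 0) (k : ℕ) : (lahPoly R n).coeff k = lah n k := by
  simp only [lahPoly, finsetSum_coeff, coeff_C_mul_X_pow]
  rw [sum_eq_single k (fun _ _ h => if_neg h.symm) fun hk => ?_, if_pos rfl]
  rw [if_pos rfl, lah_eq_zero_of_lt hn (by simpa using hk), Nat.cast_zero]

theorem lahPoly_zero : lahPoly R 0 = 1 := by
  simp [lahPoly, lah]

theorem lahPoly_succ (n : ℕ) :
    lahPoly R (n + 1) = (X + C (n : R)) * lahPoly R n + X * derivative (lahPoly R n) := by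
  rcases eq_or_ne n 0 with rfl | hn
  · simp [lahPoly, lah, sum_range_succ]
  ext (_ | k)
  · simp [coeff_lahPoly, hn, lah_zero_right]
  · simp only [coeff_add, add_mul, coeff_X_mul, coeff_C_mul, coeff_derivative, coeff_lahPoly hn,
      coeff_lahPoly n.succ_ne_zero, lah_succ_succ hn]
    push_cast
    ring

theorem eval_lahPoly {n : ℕ} (hn : n ≠ 0) (x : R) :
    (lahPoly R n).eval x = ∑ k ∈ Icc 1 n, (lah n k : R) * x ^ k := by
  rw [lahPoly, eval_finsetSum]
  simp_rw [eval_mul, eval_C, eval_pow, eval_X]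
  exact sum_range_succ_eq_sum_Icc_one (by simp [lah_zero_right hn]) n

end LahPolynomial

section StirlingExpansion

variable {R M : Type*} [CommRing R] [AddCommGroup M] [Module R M]

theorem iterate_apply_eq_sum_stirlingSecond_smul (T : M →ₗ[R] M) (g : ℕ → M)
    (hT : ∀ k, T (g k) = (k : R) • g k - g (k + 1)) (n : ℕ) :
    T^[n] (g 0) = ∑ k ∈ range (n + 1), ((-1) ^ k * Nat.stirlingSecond n k : R) • g k := by
  induction n with
  | zero => simp
  | succ n ih =>
    set c : ℕ → R := fun k => (-1) ^ k * Nat.stirlingSecond n k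
    set h : ℕ → M := fun k => (k * c k) • g k
    have hshift : ∑ k ∈ range (n + 1), h (k + 1) = ∑ k ∈ range (n + 1), h k := by
      have := (sum_range_succ' h (n + 1)).symm.trans (sum_range_succ h (n + 1))
      simpa [h, c, Nat.stirlingSecond_eq_zero_of_lt n.lt_succ_self] using this
    have hcoeff : ∀ k, ((-1) ^ (k + 1) * Nat.stirlingSecond (n + 1) (k + 1) : R)
        = (k + 1) * c (k + 1) - c k := by
      intro k
      simp only [c, Nat.stirlingSecond_succ_succ]
      push_cast
      ring
    rw [Function.iterate_succ_apply', ih, map_sum, sum_range_succ' _ (n + 1)]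
    simp only [map_smul, hT, smul_sub, smul_smul, hcoeff, sub_smul, sum_sub_distrib]
    rw [Nat.stirlingSecond_succ_zero, Nat.cast_zero, mul_zero, zero_smul, add_zero, sub_left_inj]
    simpa [h, c, mul_comm] using hshift.symm

end StirlingExpansion

section ExpExpNeg

variable {R : Type*} [CommRing R]

variable (R) in
noncomputable def expExpNegDeriv : R[X] →ₗ[R] R[X] :=
  -(LinearMap.mulLeft R X) ∘ₗ (LinearMap.id + derivative)

theorem expExpNegDeriv_apply (p : R[X]) : expExpNegDeriv R p = -X * (p + derivative p) := by
  simp [expExpNegDeriv]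

theorem expExpNegDeriv_lahPoly (n : ℕ) :
    expExpNegDeriv R (lahPoly R n) = (n : R) • lahPoly R n - lahPoly R (n + 1) := by
  rw [expExpNegDeriv_apply, lahPoly_succ, smul_eq_C_mul]
  ring

theorem iterate_expExpNegDeriv_one (n : ℕ) :
    (expExpNegDeriv R)^[n] 1
      = ∑ k ∈ range (n + 1), ((-1) ^ k * stirling n k : R) • lahPoly R k := by
  rw [← lahPoly_zero, stirling_eq_stirlingSecond]
  exact iterate_apply_eq_sum_stirlingSecond_smul _ _ expExpNegDeriv_lahPoly n

theorem hasDerivAt_exp_exp_neg_mul_eval (p : ℝ[X]) (x : ℝ) :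
    HasDerivAt (fun x => exp (exp (-x)) * p.eval (exp (-x)))
      (exp (exp (-x)) * (expExpNegDeriv ℝ p).eval (exp (-x))) x := by
  have hu : HasDerivAt (fun x => exp (-x)) (-exp (-x)) x := by simpa using (hasDerivAt_neg x).exp
  refine (hu.exp.fun_mul ((p.hasDerivAt _).comp x hu)).congr_deriv ?_
  simp only [expExpNegDeriv_apply, Function.comp_apply, eval_mul, eval_neg, eval_add, eval_X]
  ring

theorem iteratedDeriv_exp_exp_neg_mul_eval (n : ℕ) (p : ℝ[X]) :
    iteratedDeriv n (fun x => exp (exp (-x)) * p.eval (exp (-x)))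
      = fun x => exp (exp (-x)) * ((expExpNegDeriv ℝ)^[n] p).eval (exp (-x)) := by
  induction n generalizing p with
  | zero => rfl
  | succ n ih =>
    rw [iteratedDeriv_succ', funext fun x => (hasDerivAt_exp_exp_neg_mul_eval p x).deriv, ih,
      Function.iterate_succ_apply]

end ExpExpNeg

theorem iteratedDeriv_exp_exp_neg (n : ℕ) (hn : 1 ≤ n) (x : ℝ) :
    iteratedDeriv n (fun x : ℝ => Real.exp (Real.exp (-x))) x =
      Real.exp (Real.exp (-x)) *
        ∑ k ∈ Finset.Icc 1 n,
          (-1 : ℝ) ^ k *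
            (∑ ℓ ∈ Finset.Icc 1 k, (lah k ℓ : ℝ) * Real.exp (-(ℓ : ℝ) * x)) *
              (stirling n k : ℝ) := by
  obtain ⟨m, rfl⟩ := Nat.exists_eq_add_of_le' hn
  have h := congrFun (iteratedDeriv_exp_exp_neg_mul_eval (m + 1) 1) x
  simp only [eval_one, mul_one, iterate_expExpNegDeriv_one] at h
  rw [h, sum_range_succ_eq_sum_Icc_one (by simp [stirling]), eval_finsetSum]
  congr 1
  refine sum_congr rfl fun k hk => ?_
  rw [eval_smul, smul_eq_mul, eval_lahPoly (Nat.one_le_iff_ne_zero.1 (mem_Icc.1 hk).1)]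
  simp_rw [neg_mul_comm, exp_nat_mul]
  ring
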